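/- For every n ≥ 1 and every t ∈ [−1,1]^n with max_{1≤j≤n} |t_j| = 1 (i.e., t in the boundary of the cube [−1,1]^n), the first box of ℓ⁺_n(t) equals the second box of ℓ⁺_n(−t) and the second box of ℓ⁺_n(t) equals the first box of ℓ⁺_n(−t). (This boundary symmetry is what makes the chain ℓ_n = ℓ⁺_n − (−1)^n ℓ⁺_n·(12) a cycle.) -/
import Mathlib


/-- `M = max_{1 ≤ j ≤ n} |2 t_j|`. -/
noncomputable def lM {k : ℕ} (t : Fin k → ℝ) : ℝ :=
  Finset.fold max 0 (fun j => |2 * t j|) Finset.univ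

/-- Lower endpoint vector of the first box of `ℓ⁺_n(t)`. -/
noncomputable def loopLo₁ {k : ℕ} (t : Fin k → ℝ) : Fin (k+1) → ℝ :=
  Fin.cons ((1 - lM t) / 4) fun i => (-1 - 2 * t i) / 4

/-- Upper endpoint vector of the first box of `ℓ⁺_n(t)`. -/
noncomputable def loopHi₁ {k : ℕ} (t : Fin k → ℝ) : Fin (k+1) → ℝ :=
  Fin.cons ((3 - lM t) / 4) fun i => (1 - 2 * t i) / 4

/-- Lower endpoint vector of the second box of `ℓ⁺_n(t)`. -/
noncomputable def loopLo₂ {k : ℕ} (t : Fin k → ℝ) : Fin (k+1) → ℝ :=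
  Fin.cons ((-3 + lM t) / 4) fun i => (-1 + 2 * t i) / 4

/-- Upper endpoint vector of the second box of `ℓ⁺_n(t)`. -/
noncomputable def loopHi₂ {k : ℕ} (t : Fin k → ℝ) : Fin (k+1) → ℝ :=
  Fin.cons ((-1 + lM t) / 4) fun i => (1 + 2 * t i) / 4

lemma fold_max_two_mul {k : ℕ} (f : Fin k → ℝ) (s : Finset (Fin k)) :
    Finset.fold max 0 (fun j => |2 * f j|) s
      = 2 * Finset.fold max 0 (fun j => |f j|) s := by
  induction s using Finset.cons_induction with
  | empty => simp
  | cons a s ha ih =>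
    rw [Finset.fold_cons, Finset.fold_cons, ih, abs_mul, abs_two,
      mul_max_of_nonneg _ _ (by norm_num : (0:ℝ) ≤ 2)]

lemma lM_neg {k : ℕ} (t : Fin k → ℝ) : lM (-t) = lM t := by
  unfold lM
  congr 1
  funext j
  simp [abs_sub_comm]

/-- For every `n ≥ 1` (here `n = m + 1`) and every `t` in the boundary of
the cube `[-1,1]^n` (i.e. `max_j |t_j| = 1`), the first box of `ℓ⁺_n(t)` equals the second
box of `ℓ⁺_n(-t)` and the second box of `ℓ⁺_n(t)` equals the first box of `ℓ⁺_n(-t)`. -/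
theorem stmt10 (m : ℕ) (t : Fin (m+1) → ℝ) (ht : ∀ j, t j ∈ Set.Icc (-1 : ℝ) 1)
    (htb : Finset.fold max 0 (fun j => |t j|) Finset.univ = 1) :
    loopLo₁ t = loopLo₂ (-t) ∧ loopHi₁ t = loopHi₂ (-t) ∧
    loopLo₂ t = loopLo₁ (-t) ∧ loopHi₂ t = loopHi₁ (-t) := by
  have hM : lM t = 2 := by
    unfold lM; rw [fold_max_two_mul, htb]; norm_num
  have hMn : lM (-t) = 2 := by rw [lM_neg, hM]
  refine ⟨?_, ?_, ?_, ?_⟩ <;>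
  · funext i
    refine Fin.cases ?_ (fun j => ?_) i <;>
      simp [loopLo₁, loopLo₂, loopHi₁, loopHi₂, hM, hMn] <;> ring
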